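/- Consider the iteration r⁰ = C, r^{k+1} = C + Σ_{h ∈ H} ⌈r^k/T_h⌉ · C_h where C, C_h, T_h > 0. The sequence (r^k) is monotonically non-decreasing, and if Σ_{h} C_h/T_h < 1 then the sequence is bounded and converges to the least fixed point of the map r ↦ C + Σ_h ⌈r/T_h⌉·C_h. -/

import Mathlib

/-!
The iteration is `r ↦ f r` for the monotone map `f t = C + Σ_h ⌈t / T_h⌉ C_h`, started at
`C ≤ f C`, so it is non-decreasing; it stays hr_le every `s` with `f s ≤ s`. Since
`t U + C ≤ f t ≤ t U + C + Σ_h C_h` with `U = Σ_h C_h / T_h < 1`, the point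
`(C + Σ_h C_h) / (1 - U)` is such an `s`, and every `s` with `f s ≤ s` lies above `C`.
The limit is a fixed point because `⌈·⌉` is left-continuous and the iterates approach
their limit from hr_le.
-/

open Finset Filter Topology Set

theorem map_eq_of_tendsto_of_monotone {α : Type*} [TopologicalSpace α] [LinearOrder α]
    [OrderClosedTopology α] {f : α → α} {u : ℕ → α} {x : α} (hu : Monotone u)
    (hux : Tendsto u atTop (𝓝 x)) (hsucc : ∀ n, u (n + 1) = f (u n))
    (hf : ContinuousWithinAt f (Iic x) x) : f x = x := by
  have hux' : Tendsto u atTop (𝓝[≤] x) :=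
    tendsto_nhdsWithin_iff.2 ⟨hux, Eventually.of_forall (hu.ge_of_tendsto hux)⟩
  have hfu : Tendsto (fun n => u (n + 1)) atTop (𝓝 (f x)) := by
    simp only [hsucc]
    exact hf.tendsto.comp hux'
  exact tendsto_nhds_unique hfu (hux.comp (tendsto_add_atTop_nat 1))

noncomputable def responseTimeMap {ι : Type*} [Fintype ι] (C : ℝ) (Ch Th : ι → ℝ) (t : ℝ) :
    ℝ :=
  C + ∑ h, (⌈t / Th h⌉ : ℝ) * Ch h

namespace responseTimeMap

variable {ι : Type*} [Fintype ι] {C : ℝ} {Ch Th : ι → ℝ}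

theorem monotone (hCh : ∀ h, 0 ≤ Ch h) (hTh : ∀ h, 0 ≤ Th h) :
    Monotone (responseTimeMap C Ch Th) := fun _ _ hab =>
  add_le_add le_rfl (sum_le_sum fun h _ => mul_le_mul_of_nonneg_right
    (Int.cast_le.2 (Int.ceil_mono (div_le_div_of_nonneg_right hab (hTh h)))) (hCh h))

theorem add_mul_le (hCh : ∀ h, 0 ≤ Ch h) (t : ℝ) :
    C + t * ∑ h, Ch h / Th h ≤ responseTimeMap C Ch Th t := by
  rw [responseTimeMap, mul_sum]
  refine add_le_add le_rfl (sum_le_sum fun h _ => ?_)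
  calc t * (Ch h / Th h) = t / Th h * Ch h := by ring
    _ ≤ ⌈t / Th h⌉ * Ch h := mul_le_mul_of_nonneg_right (Int.le_ceil _) (hCh h)

theorem le_add_mul_add (hCh : ∀ h, 0 ≤ Ch h) (t : ℝ) :
    responseTimeMap C Ch Th t ≤ C + t * ∑ h, Ch h / Th h + ∑ h, Ch h := by
  rw [responseTimeMap, add_assoc, mul_sum, ← sum_add_distrib]
  refine add_le_add le_rfl (sum_le_sum fun h _ => ?_)
  calc (⌈t / Th h⌉ : ℝ) * Ch h ≤ (t / Th h + 1) * Ch h :=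
        mul_le_mul_of_nonneg_right (Int.ceil_lt_add_one _).le (hCh h)
    _ = t * (Ch h / Th h) + Ch h := by ring

theorem const_le_map_const (hC : 0 ≤ C) (hCh : ∀ h, 0 ≤ Ch h) (hTh : ∀ h, 0 ≤ Th h) :
    C ≤ responseTimeMap C Ch Th C := by
  have hU : 0 ≤ ∑ h, Ch h / Th h := sum_nonneg fun h _ => div_nonneg (hCh h) (hTh h)
  linarith [add_mul_le (C := C) (Th := Th) hCh C, mul_nonneg hC hU]

theorem const_le_of_map_le_self (hC : 0 ≤ C) (hCh : ∀ h, 0 ≤ Ch h) (hTh : ∀ h, 0 ≤ Th h)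
    (hU : ∑ h, Ch h / Th h < 1) {s : ℝ} (hs : responseTimeMap C Ch Th s ≤ s) : C ≤ s := by
  have hU0 : 0 ≤ ∑ h, Ch h / Th h := sum_nonneg fun h _ => div_nonneg (hCh h) (hTh h)
  have hCs := (add_mul_le hCh s).trans hs
  have hs0 : 0 ≤ s := by nlinarith
  nlinarith

theorem map_div_one_sub_le (hCh : ∀ h, 0 ≤ Ch h) (hTh : ∀ h, 0 ≤ Th h)
    (hU : ∑ h, Ch h / Th h < 1) :
    responseTimeMap C Ch Th ((C + ∑ h, Ch h) / (1 - ∑ h, Ch h / Th h)) ≤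
      (C + ∑ h, Ch h) / (1 - ∑ h, Ch h / Th h) := by
  set U := ∑ h, Ch h / Th h
  have hU0 : 0 ≤ U := sum_nonneg fun h _ => div_nonneg (hCh h) (hTh h)
  have hB : (C + ∑ h, Ch h) / (1 - U) * (1 - U) = C + ∑ h, Ch h :=
    div_mul_cancel₀ _ (sub_pos.2 hU).ne'
  linarith [le_add_mul_add (C := C) (Th := Th) hCh ((C + ∑ h, Ch h) / (1 - U))]

theorem continuousWithinAt_Iic (hTh : ∀ h, 0 ≤ Th h) (t : ℝ) :
    ContinuousWithinAt (responseTimeMap C Ch Th) (Iic t) t := by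
  refine tendsto_const_nhds.add (tendsto_finsetSum _ fun h _ => ?_)
  have hdiv : Tendsto (· / Th h) (𝓝[≤] t) (𝓝[≤] (t / Th h)) :=
    tendsto_nhdsWithin_iff.2 ⟨(continuous_id.div_const _).continuousWithinAt,
      eventually_nhdsWithin_of_forall fun _ hx => div_le_div_of_nonneg_right hx (hTh h)⟩
  have hceil := (tendsto_ceil_left_pure_ceil (t / Th h)).comp hdiv
  exact (tendsto_pure_nhds (fun n : ℤ => (n : ℝ) * Ch h) _).comp hceil

end responseTimeMap

/-- The response-time iteration `r⁰ = C`, `r^{k+1} = C + Σ_h ⌈r^k/T_h⌉·C_h` is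
monotonically non-decreasing, and if `Σ_h C_h/T_h < 1` it is bounded and converges
to the least fixed point of `r ↦ C + Σ_h ⌈r/T_h⌉·C_h`. -/
theorem response_time_iteration (k : ℕ) (C : ℝ) (Ch Th : Fin k → ℝ)
    (hC : 0 < C) (hCh : ∀ h, 0 < Ch h) (hTh : ∀ h, 0 < Th h)
    (r : ℕ → ℝ) (hr0 : r 0 = C)
    (hrs : ∀ j : ℕ, r (j + 1) = C + ∑ h, (⌈r j / Th h⌉ : ℝ) * Ch h) :
    Monotone r ∧
    ((∑ h, Ch h / Th h) < 1 →
      (∃ B : ℝ, ∀ j, r j ≤ B) ∧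
      ∃ rstar : ℝ, Filter.Tendsto r Filter.atTop (nhds rstar) ∧
        rstar = C + ∑ h, (⌈rstar / Th h⌉ : ℝ) * Ch h ∧
        ∀ s : ℝ, s = C + ∑ h, (⌈s / Th h⌉ : ℝ) * Ch h → rstar ≤ s) := by
  set f := responseTimeMap C Ch Th
  have hCh' h := (hCh h).le
  have hTh' h := (hTh h).le
  have hf : Monotone f := responseTimeMap.monotone hCh' hTh'
  have hr : r = fun j => f^[j] C := by
    funext j
    induction j with
    | zero => exact hr0
    | succ j ih => rw [hrs, ih, Function.iterate_succ_apply']; rfl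
  have hmono : Monotone r :=
    hr ▸ hf.monotone_iterate_of_le_map (responseTimeMap.const_le_map_const hC.le hCh' hTh')
  refine ⟨hmono, fun hU => ?_⟩
  have hr_le : ∀ s, f s ≤ s → ∀ j, r j ≤ s := fun s hs j =>
    hr ▸ (hf.mapsTo_Iic.mono_right (Iic_subset_Iic.2 hs)).iterate j
      (responseTimeMap.const_le_of_map_le_self hC.le hCh' hTh' hU hs)
  have hbound := hr_le _ (responseTimeMap.map_div_one_sub_le hCh' hTh' hU)
  have hlim := tendsto_atTop_ciSup hmono ⟨_, forall_mem_range.2 hbound⟩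
  refine ⟨⟨_, hbound⟩, ⨆ j, r j, hlim, ?_, fun s hs => ciSup_le (hr_le s hs.symm.le)⟩
  exact (map_eq_of_tendsto_of_monotone hmono hlim hrs
    (responseTimeMap.continuousWithinAt_Iic hTh' _)).symm
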